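/- arXiv:1903.05332 — 3 statements merged into one kernel-verified Lean document; each statement's English description precedes it below -/
import Mathlib

section
/- Let D be a bipartite tournament with bipartition (V_1,V_2), \zeta(D) >= 1, sink sequence (W_0,...,W_{\zeta(D)}), and let \mathcal{W}_m = W_0 \cup ... \cup W_{m-1}. Then for every positive integer m < \zeta(D), each of V_1 \setminus \mathcal{W}_m and V_2 \setminus \mathcal{W}_m forms a clique in C^m(D). -/
/-- `walkN D n u v` : there is a directed walk of length `n` from `u` to `v` in the digraph `D`. -/
def walkN {V : Type*} (D : V → V → Prop) : ℕ → V → V → Prop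
  | 0 => fun u v => u = v
  | n+1 => fun u v => ∃ w, D u w ∧ walkN D n w v

/-- The `m`-step competition graph of the digraph `D`. -/
def cmGraph {V : Type*} (D : V → V → Prop) (m : ℕ) : SimpleGraph V where
  Adj u v := u ≠ v ∧ ∃ z, walkN D m u z ∧ walkN D m v z
  symm := by
    constructor
    intro u v h
    exact ⟨Ne.symm h.1, h.2.imp fun z hz => ⟨hz.2, hz.1⟩⟩
  loopless := by constructor; intro v h; exact h.1 rfl

/-- Sinks of the subdigraph of `D` induced by `S`. -/
def sinks {V : Type*} (D : V → V → Prop) (S : Set V) : Set V :=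
  {v ∈ S | ∀ w ∈ S, ¬ D v w}

/-- The digraph sequence `D_0, D_1, …` (as vertex sets) associated with the sink sequence. -/
def Dseq {V : Type*} (D : V → V → Prop) : ℕ → Set V
  | 0 => Set.univ
  | n+1 => Dseq D n \ sinks D (Dseq D n)

/-- The sink sequence `W_0, W_1, …` of `D`. -/
def Wseq {V : Type*} (D : V → V → Prop) (n : ℕ) : Set V := sinks D (Dseq D n)

/-- `k` is the sink elimination index `ζ(D)`. -/
def IsSinkElimIndex {V : Type*} (D : V → V → Prop) (k : ℕ) : Prop :=
  (Wseq D k = Dseq D k ∨ Wseq D k = ∅) ∧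
  ∀ j < k, Wseq D j ≠ Dseq D j ∧ Wseq D j ≠ ∅

/-- A digraph is acyclic iff it has no directed closed walk of positive length. -/
def DigraphAcyclic {V : Type*} (D : V → V → Prop) : Prop :=
  ∀ v : V, ∀ n : ℕ, 0 < n → ¬ walkN D n v v

/-- `D` is a bipartite tournament with bipartition `(V1, V2)`. -/
structure IsBipartiteTournament {V : Type*} (D : V → V → Prop) (V1 V2 : Set V) : Prop where
  nonempty1 : V1.Nonempty
  nonempty2 : V2.Nonempty
  union_eq : V1 ∪ V2 = Set.univ
  disj : V1 ∩ V2 = ∅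
  oriented : ∀ x ∈ V1, ∀ y ∈ V2, Xor' (D x y) (D y x)
  no_intra : ∀ x y, D x y → (x ∈ V1 ∧ y ∈ V2) ∨ (x ∈ V2 ∧ y ∈ V1)

/-- The competition graph sequence of `D` is eventually equal, starting from `q`. -/
def PeriodicFrom {V : Type*} (D : V → V → Prop) (q : ℕ) : Prop :=
  ∃ r, 0 < r ∧ ∀ i : ℕ, cmGraph D (q + i) = cmGraph D (q + r + i)

/-- `q` is the competition index of `D`. -/
def IsCindex {V : Type*} (D : V → V → Prop) (q : ℕ) : Prop :=
  0 < q ∧ PeriodicFrom D q ∧ ∀ q', 0 < q' → PeriodicFrom D q' → q ≤ q'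

/-- `p` is the competition period of `D`, given that `q` is its competition index. -/
def IsCperiod {V : Type*} (D : V → V → Prop) (q p : ℕ) : Prop :=
  0 < p ∧ cmGraph D q = cmGraph D (q + p) ∧
    ∀ p', 0 < p' → cmGraph D q = cmGraph D (q + p') → p ≤ p'


/-!
Every vertex of `W_{i+1}` has an arc into `W_i`, so from any vertex of `W_{j+n}` there is a
walk of length `n` ending in `W_j`. Pick `w ∈ W_m` (nonempty as `m < ζ(D)`). In a bipartite
tournament a vertex of `D_i` has an arc to every sink of `D_i` on the other side. If `w ∈ V_2`,
every `u ∈ V_1 ∩ D_m` steps to `w` and then walks `m - 1` steps along the sink sequence; if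
`w ∈ V_1`, its arc into `W_{m-1}` lands in some `y ∈ V_2`, and every such `u` steps to `y` and
continues for `m - 1` steps. Either way all of `V_1 \ 𝒲_m = V_1 ∩ D_m` reach one common vertex
in exactly `m` steps.
-/

section SinkSequence

variable {V : Type*} (D : V → V → Prop)

lemma Dseq_eq_compl_iUnion_Wseq (n : ℕ) :
    Dseq D n = (⋃ i ∈ Finset.range n, Wseq D i)ᶜ := by
  induction n with
  | zero => simp [Dseq]
  | succ n ih =>
    rw [Finset.range_add_one, Finset.set_biUnion_insert, Set.compl_union, ← ih,
      Set.inter_comm, ← Set.sdiff_eq]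
    rfl

variable {D}

lemma exists_adj_mem_Wseq_of_mem_Wseq_succ {n : ℕ} {y : V} (hy : y ∈ Wseq D (n + 1)) :
    ∃ z ∈ Wseq D n, D y z := by
  obtain ⟨⟨hyD, hyW⟩, hy_sink⟩ := hy
  by_contra! h
  exact hyW ⟨hyD, fun z hz hyz => hy_sink z ⟨hz, fun hzW => h z hzW hyz⟩ hyz⟩

lemma exists_walkN_of_mem_Wseq_add (j : ℕ) {n : ℕ} {y : V} (hy : y ∈ Wseq D (j + n)) :
    ∃ z ∈ Wseq D j, walkN D n y z := by
  induction n generalizing y with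
  | zero => exact ⟨y, hy, rfl⟩
  | succ n ih =>
    obtain ⟨y', hy', hyy'⟩ := exists_adj_mem_Wseq_of_mem_Wseq_succ hy
    obtain ⟨z, hz, hwalk⟩ := ih hy'
    exact ⟨z, hz, y', hyy', hwalk⟩

end SinkSequence

namespace IsBipartiteTournament

variable {V : Type*} {D : V → V → Prop} {V1 V2 : Set V}

lemma swap (hD : IsBipartiteTournament D V1 V2) : IsBipartiteTournament D V2 V1 where
  nonempty1 := hD.nonempty2
  nonempty2 := hD.nonempty1
  union_eq := by rw [Set.union_comm, hD.union_eq]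
  disj := by rw [Set.inter_comm, hD.disj]
  oriented x hx y hy := (hD.oriented y hy x hx).symm
  no_intra x y h := (hD.no_intra x y h).symm

lemma adj_of_mem_Wseq (hD : IsBipartiteTournament D V1 V2) {n : ℕ} {x w : V}
    (hx : x ∈ V1 ∩ Dseq D n) (hw : w ∈ V2 ∩ Wseq D n) : D x w :=
  (Xor.or (hD.oriented x hx.1 w hw.1)).resolve_right (hw.2.2 x hx.2)

lemma exists_forall_walkN_of_Wseq_nonempty (hD : IsBipartiteTournament D V1 V2) {m : ℕ}
    (hm : 0 < m) (hW : (Wseq D m).Nonempty) :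
    ∃ z, ∀ u ∈ V1 ∩ Dseq D m, walkN D m u z := by
  obtain ⟨n, rfl⟩ := Nat.exists_eq_add_of_lt hm
  rw [zero_add] at hW ⊢
  obtain ⟨w, hw⟩ := hW
  by_cases hwV2 : w ∈ V2
  · obtain ⟨z, -, hwalk⟩ := exists_walkN_of_mem_Wseq_add 1 (n := n) (by rwa [add_comm])
    exact ⟨z, fun u hu => ⟨w, hD.adj_of_mem_Wseq hu ⟨hwV2, hw⟩, hwalk⟩⟩
  · obtain ⟨y, hy, hwy⟩ := exists_adj_mem_Wseq_of_mem_Wseq_succ hw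
    have hyV2 : y ∈ V2 := ((hD.no_intra w y hwy).resolve_right fun h => hwV2 h.1).2
    obtain ⟨z, -, hwalk⟩ := exists_walkN_of_mem_Wseq_add 0 (by rwa [zero_add])
    exact ⟨z, fun u hu => ⟨y, hD.adj_of_mem_Wseq ⟨hu.1, hu.2.1⟩ ⟨hyV2, hy⟩, hwalk⟩⟩

lemma isClique_inter_Dseq (hD : IsBipartiteTournament D V1 V2) {m : ℕ} (hm : 0 < m)
    (hW : (Wseq D m).Nonempty) : (cmGraph D m).IsClique (V1 ∩ Dseq D m) := by
  obtain ⟨z, hz⟩ := hD.exists_forall_walkN_of_Wseq_nonempty hm hW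
  exact fun u hu v hv huv => ⟨huv, z, hz u hu, hz v hv⟩

end IsBipartiteTournament

theorem parts_minus_eliminated_form_cliques_general {V : Type*} (D : V → V → Prop)
    (V1 V2 : Set V) (hD : IsBipartiteTournament D V1 V2)
    (k : ℕ) (hk : IsSinkElimIndex D k)
    (m : ℕ) (hm : 0 < m) (hmk : m < k) :
    (cmGraph D m).IsClique (V1 \ ⋃ i ∈ Finset.range m, Wseq D i) ∧
    (cmGraph D m).IsClique (V2 \ ⋃ i ∈ Finset.range m, Wseq D i) := by
  have hW : (Wseq D m).Nonempty := Set.nonempty_iff_ne_empty.mpr (hk.2 m hmk).2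
  simp only [Set.sdiff_eq, ← Dseq_eq_compl_iUnion_Wseq]
  exact ⟨hD.isClique_inter_Dseq hm hW, hD.swap.isClique_inter_Dseq hm hW⟩

/-- In a bipartite tournament with `ζ(D) ≥ 1`, for every positive `m < ζ(D)`,
each of `V1 \ 𝒲_m` and `V2 \ 𝒲_m` forms a clique in `C^m(D)`, where
`𝒲_m = W_0 ∪ ⋯ ∪ W_{m-1}`. -/
theorem parts_minus_eliminated_form_cliques {V : Type*} [Fintype V] (D : V → V → Prop)
    (V1 V2 : Set V) (hD : IsBipartiteTournament D V1 V2)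
    (k : ℕ) (hk : IsSinkElimIndex D k) (hk1 : 1 ≤ k)
    (m : ℕ) (hm : 0 < m) (hmk : m < k) :
    (cmGraph D m).IsClique (V1 \ ⋃ i ∈ Finset.range m, Wseq D i) ∧
    (cmGraph D m).IsClique (V2 \ ⋃ i ∈ Finset.range m, Wseq D i) :=
  parts_minus_eliminated_form_cliques_general D V1 V2 hD k hk m hm hmk
end

section
/- Let D be an acyclic bipartite tournament with sink sequence (W_0,...,W_{\zeta(D)}) and let m = \zeta(D) >= 1. Then C^m(D) is the disjoint union of a complete graph on W_{\zeta(D)} and isolated vertices on W_0 \cup ... \cup W_{m-1}; that is, two distinct vertices are adjacent in C^m(D) iff both lie in W_{\zeta(D)}. -/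
/-!
After `ζ(D) = k ≥ 1` steps the remaining digraph `D_k` is nonempty and, by acyclicity, consists
of sinks only, so `D_{k+1} = ∅`. A vertex lies in `D_n` exactly when a walk of length `n` starts
at it, hence `C^k(D)` only has edges inside `W_k = D_k`, and every walk of length `k` ends at a
sink of the whole of `D`. Two sinks of a bipartite tournament lie on the same side, so any arc
into one sink is matched by an arc into every other sink: the last arc of a `k`-walk from `v` can
be redirected to the endpoint of a `k`-walk from `u`.
-/

open Relation

section

variable {V : Type*} {D : V → V → Prop}

theorem walkN_succ_right : ∀ (n : ℕ) (u v : V),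
    walkN D (n + 1) u v ↔ ∃ w, walkN D n u w ∧ D w v
  | 0, u, v => by
    constructor
    · rintro ⟨w, h, rfl⟩
      exact ⟨u, rfl, h⟩
    · rintro ⟨w, rfl, h⟩
      exact ⟨v, h, rfl⟩
  | n + 1, u, v => by
    constructor
    · rintro ⟨a, hua, hav⟩
      obtain ⟨w, haw, hwv⟩ := (walkN_succ_right n a v).1 hav
      exact ⟨w, ⟨a, hua, haw⟩, hwv⟩
    · rintro ⟨w, ⟨a, hua, haw⟩, hwv⟩
      exact ⟨a, hua, (walkN_succ_right n a v).2 ⟨w, haw, hwv⟩⟩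

theorem exists_walkN_succ_of_transGen {u v : V} (h : TransGen D u v) :
    ∃ n, walkN D (n + 1) u v := by
  induction h using TransGen.head_induction_on with
  | single h => exact ⟨0, _, h, rfl⟩
  | head hab _ ih =>
    obtain ⟨n, hn⟩ := ih
    exact ⟨n + 1, _, hab, hn⟩

theorem DigraphAcyclic.wellFounded_swap [Finite V] (hacyc : DigraphAcyclic D) :
    WellFounded (Function.swap D) := by
  have : Std.Irrefl (TransGen (Function.swap D)) := ⟨fun v hv => by
    obtain ⟨n, hn⟩ := exists_walkN_succ_of_transGen (transGen_swap.1 hv)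
    exact hacyc v (n + 1) n.succ_pos hn⟩
  exact Subrelation.wf TransGen.single (Finite.wellFounded_of_trans_of_irrefl _)

theorem DigraphAcyclic.sinks_nonempty [Finite V] (hacyc : DigraphAcyclic D) {S : Set V}
    (hS : S.Nonempty) : (sinks D S).Nonempty :=
  let ⟨v, hv, hmin⟩ := hacyc.wellFounded_swap.has_min S hS
  ⟨v, hv, hmin⟩

theorem mem_Dseq_succ_of_adj {x y : V} (hxy : D x y) : ∀ {n : ℕ}, y ∈ Dseq D n →
    x ∈ Dseq D (n + 1)
  | 0, _ => ⟨trivial, fun hx => hx.2 y trivial hxy⟩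
  | _ + 1, hy => ⟨mem_Dseq_succ_of_adj hxy hy.1, fun hx => hx.2 y hy hxy⟩

theorem mem_Dseq_iff_exists_walkN : ∀ {n : ℕ} {x : V}, x ∈ Dseq D n ↔ ∃ z, walkN D n x z
  | 0, x => ⟨fun _ => ⟨x, rfl⟩, fun _ => trivial⟩
  | n + 1, x => by
    constructor
    · rintro ⟨hx, hx_not_sink⟩
      obtain ⟨w, hw, hxw⟩ : ∃ w ∈ Dseq D n, D x w := by
        by_contra! h
        exact hx_not_sink ⟨hx, h⟩
      obtain ⟨z, hz⟩ := mem_Dseq_iff_exists_walkN.1 hw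
      exact ⟨z, w, hxw, hz⟩
    · rintro ⟨z, w, hxw, hwz⟩
      exact mem_Dseq_succ_of_adj hxw (mem_Dseq_iff_exists_walkN.2 ⟨z, hwz⟩)

theorem Dseq_succ_eq_empty_of_Wseq_eq {k : ℕ} (h : Wseq D k = Dseq D k) :
    Dseq D (k + 1) = ∅ := by
  change Dseq D k \ Wseq D k = ∅
  rw [h, Set.sdiff_self]

theorem IsSinkElimIndex.Wseq_eq_Dseq [Finite V] (hacyc : DigraphAcyclic D) {k : ℕ}
    (hk : IsSinkElimIndex D k) (hk1 : 1 ≤ k) : Wseq D k = Dseq D k := by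
  obtain ⟨j, rfl⟩ := Nat.exists_eq_add_of_le' hk1
  have hne : (Dseq D (j + 1)).Nonempty :=
    Set.sdiff_nonempty.2 fun h => (hk.2 j j.lt_succ_self).1 (h.antisymm' fun _ hv => hv.1)
  exact hk.1.resolve_right (hacyc.sinks_nonempty hne).ne_empty

theorem not_adj_of_walkN_of_Dseq_eq_empty {k : ℕ} (h : Dseq D (k + 1) = ∅) {x z : V}
    (hxz : walkN D k x z) (w : V) : ¬ D z w := fun hzw => by
  have hx : x ∈ Dseq D (k + 1) :=
    mem_Dseq_iff_exists_walkN.2 ⟨w, (walkN_succ_right k x w).2 ⟨z, hxz, hzw⟩⟩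
  rwa [h] at hx

namespace IsBipartiteTournament

variable {V1 V2 : Set V} (hD : IsBipartiteTournament D V1 V2)
include hD

theorem mem_right_iff {x : V} : x ∈ V2 ↔ x ∉ V1 := by
  have hx : x ∈ V1 ∪ V2 := hD.union_eq ▸ Set.mem_univ x
  have hdisj : x ∉ V1 ∩ V2 := hD.disj ▸ Set.notMem_empty x
  simp only [Set.mem_union, Set.mem_inter_iff] at hx hdisj
  tauto

theorem mem_left_iff_not_of_adj {x y : V} (hxy : D x y) : x ∈ V1 ↔ y ∉ V1 := by
  have := hD.no_intra x y hxy
  simp only [hD.mem_right_iff] at this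
  tauto

theorem adj_or_adj_of_mem_left_iff_not {x y : V} (hxy : x ∈ V1 ↔ y ∉ V1) :
    D x y ∨ D y x := by
  by_cases hx : x ∈ V1
  · exact Xor.or (hD.oriented x hx y (hD.mem_right_iff.2 (hxy.1 hx)))
  · exact (Xor.or (hD.oriented y (not_not.1 (mt hxy.2 hx)) x (hD.mem_right_iff.2 hx))).symm

theorem adj_of_adj_of_sinks {y z z' : V} (hz : ∀ w, ¬ D z w) (hz' : ∀ w, ¬ D z' w)
    (hyz' : D y z') : D y z := by
  have hside : z ∈ V1 ↔ z' ∈ V1 := by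
    by_contra h
    rcases hD.adj_or_adj_of_mem_left_iff_not (x := z) (y := z') (by tauto) with h | h
    exacts [hz z' h, hz' z h]
  have hy := hD.mem_left_iff_not_of_adj hyz'
  exact (hD.adj_or_adj_of_mem_left_iff_not (x := y) (y := z) (by tauto)).resolve_right (hz y)

end IsBipartiteTournament

end

/-- For an acyclic bipartite tournament with `m = ζ(D) ≥ 1`, two distinct
vertices are adjacent in `C^m(D)` iff both lie in `W_{ζ(D)}`; all other vertices are
isolated. -/
theorem cmGraph_at_zeta {V : Type*} [Fintype V] (D : V → V → Prop)
    (V1 V2 : Set V) (hD : IsBipartiteTournament D V1 V2)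
    (hacyc : DigraphAcyclic D)
    (k : ℕ) (hk : IsSinkElimIndex D k) (hk1 : 1 ≤ k) :
    ∀ u v : V, (cmGraph D k).Adj u v ↔ u ≠ v ∧ u ∈ Wseq D k ∧ v ∈ Wseq D k := by
  intro u v
  have hWD := hk.Wseq_eq_Dseq hacyc hk1
  have hempty := Dseq_succ_eq_empty_of_Wseq_eq hWD
  rw [hWD, mem_Dseq_iff_exists_walkN, mem_Dseq_iff_exists_walkN]
  constructor
  · rintro ⟨hne, z, hu, hv⟩
    exact ⟨hne, ⟨z, hu⟩, ⟨z, hv⟩⟩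
  · rintro ⟨hne, ⟨z, hu⟩, ⟨z', hv⟩⟩
    obtain ⟨j, rfl⟩ := Nat.exists_eq_add_of_le' hk1
    obtain ⟨y, hvy, hyz'⟩ := (walkN_succ_right j v z').1 hv
    have hyz := hD.adj_of_adj_of_sinks (not_adj_of_walkN_of_Dseq_eq_empty hempty hu)
      (not_adj_of_walkN_of_Dseq_eq_empty hempty hv) hyz'
    exact ⟨hne, z, hu, (walkN_succ_right j v z).2 ⟨y, hvy, hyz⟩⟩
end

section
/- Let D be a bipartite tournament with no sinks. If two vertices are adjacent in C^M(D) for some positive integer M, then they are adjacent in C^m(D) for some positive integer m <= 4; consequently cindex(D) <= 4 and cperiod(D) = 1. -/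
/-!
Vertices with a common `M`-step prey lie on the same side of the bipartition. If two such
vertices `u, v` had no common `k`-step prey for `1 ≤ k ≤ 4`, then every out-neighbour of `u`
beats `v` and vice versa, so there are `2`-walks `u → v` and `v → u`. Avoiding a common
`4`-step prey then forces every `3`-step prey of `u` to be an out-neighbour of `v` and
conversely, which makes the `k`-step prey sets of `u` and of `v` periodic in `k ≥ 1` with
period `4`; so they have no common prey at any length. As `C^m(D)` only grows with `m` when
there are no sinks, `C^m(D) = C^4(D)` for all `m ≥ 4`.
-/

def NoCommonPreyUpTo {V : Type*} (D : V → V → Prop) (n : ℕ) (u v : V) : Prop :=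
  ∀ k, 0 < k → k ≤ n → ∀ z, walkN D k u z → walkN D k v z → False

section Walks

variable {V : Type*} {D : V → V → Prop}

lemma walkN_one {u v : V} : walkN D 1 u v ↔ D u v :=
  ⟨fun ⟨_, h, rfl⟩ => h, fun h => ⟨v, h, rfl⟩⟩

lemma walkN_add (a b : ℕ) (u v : V) :
    walkN D (a + b) u v ↔ ∃ w, walkN D a u w ∧ walkN D b w v := by
  induction a generalizing u with
  | zero => simp [walkN]
  | succ a ih =>
    rw [Nat.add_right_comm]
    simp only [walkN, ih]
    exact ⟨fun ⟨w, huw, x, hwx, hxv⟩ => ⟨x, ⟨w, huw, hwx⟩, hxv⟩,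
      fun ⟨x, ⟨w, huw, hwx⟩, hxv⟩ => ⟨w, huw, x, hwx, hxv⟩⟩

lemma exists_walkN_of_forall_exists_adj (hnosink : ∀ v : V, ∃ w, D v w) (n : ℕ) (u : V) :
    ∃ w, walkN D n u w := by
  induction n generalizing u with
  | zero => exact ⟨u, rfl⟩
  | succ n ih =>
    obtain ⟨x, hux⟩ := hnosink u
    obtain ⟨w, hxw⟩ := ih x
    exact ⟨w, x, hux, hxw⟩

lemma cmGraph_adj_mono (hnosink : ∀ v : V, ∃ w, D v w) {m m' : ℕ} (hmm' : m ≤ m')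
    {u v : V} (h : (cmGraph D m).Adj u v) : (cmGraph D m').Adj u v := by
  obtain ⟨hne, z, hu, hv⟩ := h
  obtain ⟨n, rfl⟩ := Nat.exists_eq_add_of_le hmm'
  obtain ⟨w, hzw⟩ := exists_walkN_of_forall_exists_adj hnosink n z
  exact ⟨hne, w, (walkN_add _ _ _ _).2 ⟨z, hu, hzw⟩, (walkN_add _ _ _ _).2 ⟨z, hv, hzw⟩⟩

lemma walkN_add_mul_iff_of_period {p : ℕ} {u : V}
    (hp : ∀ k, 0 < k → ∀ z, walkN D (k + p) u z ↔ walkN D k u z)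
    {k : ℕ} (hk : 0 < k) (q : ℕ) (z : V) : walkN D (k + p * q) u z ↔ walkN D k u z := by
  induction q with
  | zero => simp
  | succ q ih =>
    rw [Nat.mul_succ, ← Nat.add_assoc, hp _ (by omega), ih]

end Walks

namespace IsBipartiteTournament

variable {V : Type*} {D : V → V → Prop} {V1 V2 : Set V}

lemma mem_right_iff_notMem_left (hD : IsBipartiteTournament D V1 V2) {x : V} :
    x ∈ V2 ↔ x ∉ V1 := by
  have hunion : x ∈ V1 ∪ V2 := hD.union_eq ▸ Set.mem_univ x
  have hdisj : x ∉ V1 ∩ V2 := hD.disj ▸ Set.notMem_empty x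
  constructor
  · exact fun h2 h1 => hdisj ⟨h1, h2⟩
  · exact fun h1 => hunion.resolve_left h1

lemma mem_left_iff_of_adj (hD : IsBipartiteTournament D V1 V2) {x y : V}
    (h : D x y) : x ∈ V1 ↔ y ∉ V1 := by
  rcases hD.no_intra x y h with ⟨hx, hy⟩ | ⟨hx, hy⟩
  · exact iff_of_true hx (hD.mem_right_iff_notMem_left.1 hy)
  · exact iff_of_false (hD.mem_right_iff_notMem_left.1 hx) (not_not.2 hy)

lemma adj_or_adj (hD : IsBipartiteTournament D V1 V2) {x y : V} (hxy : x ∈ V1 ↔ y ∉ V1) :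
    D x y ∨ D y x := by
  by_cases hx : x ∈ V1
  · exact (hD.oriented x hx y (hD.mem_right_iff_notMem_left.2 (hxy.1 hx))).imp And.left And.left
  · have hy : y ∈ V1 := not_not.1 (mt hxy.2 hx)
    exact ((hD.oriented y hy x (hD.mem_right_iff_notMem_left.2 hx)).imp And.left And.left).symm

lemma walkN_mem_iff (hD : IsBipartiteTournament D V1 V2) {n : ℕ} {u z : V}
    (h : walkN D n u z) : u ∈ V1 ↔ (z ∈ V1 ↔ Even n) := by
  induction n generalizing u with
  | zero => cases h; simp
  | succ n ih =>
    obtain ⟨w, huw, hwz⟩ := h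
    rw [hD.mem_left_iff_of_adj huw, ih hwz, Nat.even_add_one]
    tauto

lemma adj_or_adj_of_walkN_of_not_even (hD : IsBipartiteTournament D V1 V2) {u v z : V}
    (huv : u ∈ V1 ↔ v ∈ V1) {n : ℕ} (hz : walkN D n u z) (hn : ¬Even n) :
    D v z ∨ D z v :=
  hD.adj_or_adj (by rw [← huv, hD.walkN_mem_iff hz]; tauto)

end IsBipartiteTournament

namespace NoCommonPreyUpTo

variable {V : Type*} {D : V → V → Prop} {V1 V2 : Set V} {u v : V}

lemma symm {n : ℕ} (H : NoCommonPreyUpTo D n u v) : NoCommonPreyUpTo D n v u :=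
  fun k hk hkn z hv hu => H k hk hkn z hu hv

lemma walkN_two (hD : IsBipartiteTournament D V1 V2) (hnosink : ∀ v : V, ∃ w, D v w)
    (huv : u ∈ V1 ↔ v ∈ V1) (H : NoCommonPreyUpTo D 4 u v) : walkN D 2 u v := by
  obtain ⟨y, huy⟩ := hnosink u
  refine ⟨y, huy, v, ?_, rfl⟩
  refine (hD.adj_or_adj_of_walkN_of_not_even huv (walkN_one.2 huy) (by decide)).resolve_left ?_
  exact fun hvy => H 1 one_pos (by decide) y (walkN_one.2 huy) (walkN_one.2 hvy)

/-- A `3`-step prey `z` of `u` that beat `v` would give the common `4`-step prey `v`, since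
`v → u → v` is a `4`-walk. -/
lemma adj_of_walkN_three (hD : IsBipartiteTournament D V1 V2)
    (hnosink : ∀ v : V, ∃ w, D v w) (huv : u ∈ V1 ↔ v ∈ V1) (H : NoCommonPreyUpTo D 4 u v)
    {z : V} (hz : walkN D 3 u z) : D v z := by
  refine (hD.adj_or_adj_of_walkN_of_not_even huv hz (by decide)).resolve_right fun hzv => ?_
  have huv4 : walkN D 4 u v := (walkN_add 3 1 u v).2 ⟨z, hz, walkN_one.2 hzv⟩
  have hvv4 : walkN D 4 v v := (walkN_add 2 2 v v).2
    ⟨u, H.symm.walkN_two hD hnosink huv.symm, H.walkN_two hD hnosink huv⟩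
  exact H 4 (by decide) le_rfl v huv4 hvv4

lemma walkN_five_iff (hD : IsBipartiteTournament D V1 V2)
    (hnosink : ∀ v : V, ∃ w, D v w) (huv : u ∈ V1 ↔ v ∈ V1) (H : NoCommonPreyUpTo D 4 u v)
    {z : V} : walkN D 5 u z ↔ D u z := by
  have huv2 := H.walkN_two hD hnosink huv
  have hvu2 := H.symm.walkN_two hD hnosink huv.symm
  constructor
  · intro hz
    obtain ⟨w, huw, hwz⟩ := (walkN_add 3 2 u z).1 hz
    have hvz : walkN D 3 v z := ⟨w, H.adj_of_walkN_three hD hnosink huv huw, hwz⟩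
    exact H.symm.adj_of_walkN_three hD hnosink huv.symm hvz
  · intro huz
    obtain ⟨w, hvw, hwz⟩ : walkN D 3 v z := (walkN_add 2 1 v z).2 ⟨u, hvu2, walkN_one.2 huz⟩
    exact (walkN_add 3 2 u z).2 ⟨w, (walkN_add 2 1 u w).2 ⟨v, huv2, walkN_one.2 hvw⟩, hwz⟩

lemma walkN_add_four_iff (hD : IsBipartiteTournament D V1 V2)
    (hnosink : ∀ v : V, ∃ w, D v w) (huv : u ∈ V1 ↔ v ∈ V1) (H : NoCommonPreyUpTo D 4 u v)
    (k : ℕ) (hk : 0 < k) (z : V) : walkN D (k + 4) u z ↔ walkN D k u z := by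
  obtain ⟨j, rfl⟩ : ∃ j, k = j + 1 := ⟨k - 1, by omega⟩
  rw [show j + 1 + 4 = 5 + j by omega, walkN_add]
  exact exists_congr fun w => and_congr_left fun _ => H.walkN_five_iff hD hnosink huv

end NoCommonPreyUpTo

section CompetitionGraph

variable {V : Type*} {D : V → V → Prop} {V1 V2 : Set V}

lemma exists_cmGraph_adj_le_four (hD : IsBipartiteTournament D V1 V2)
    (hnosink : ∀ v : V, ∃ w, D v w) {M : ℕ} (hM : 0 < M) {u v : V}
    (h : (cmGraph D M).Adj u v) : ∃ m, 0 < m ∧ m ≤ 4 ∧ (cmGraph D m).Adj u v := by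
  obtain ⟨hne, z, hu, hv⟩ := h
  by_contra! hcon
  have H : NoCommonPreyUpTo D 4 u v := fun k hk hk4 z hu hv => hcon k hk hk4 ⟨hne, z, hu, hv⟩
  have huv : u ∈ V1 ↔ v ∈ V1 := (hD.walkN_mem_iff hu).trans (hD.walkN_mem_iff hv).symm
  obtain ⟨m, q, hm, hm4, rfl⟩ : ∃ m q, 0 < m ∧ m ≤ 4 ∧ M = m + 4 * q :=
    ⟨(M - 1) % 4 + 1, (M - 1) / 4, by omega, by omega, by omega⟩
  have hu4 := H.walkN_add_four_iff hD hnosink huv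
  have hv4 := H.symm.walkN_add_four_iff hD hnosink huv.symm
  exact H m hm hm4 z ((walkN_add_mul_iff_of_period hu4 hm q z).1 hu)
    ((walkN_add_mul_iff_of_period hv4 hm q z).1 hv)

lemma cmGraph_eq_four (hD : IsBipartiteTournament D V1 V2) (hnosink : ∀ v : V, ∃ w, D v w)
    {m : ℕ} (hm : 4 ≤ m) : cmGraph D m = cmGraph D 4 := by
  ext u v
  refine ⟨fun h => ?_, cmGraph_adj_mono hnosink hm⟩
  obtain ⟨k, -, hk4, hk⟩ := exists_cmGraph_adj_le_four hD hnosink (by omega) h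
  exact cmGraph_adj_mono hnosink hk4 hk

end CompetitionGraph

lemma eq_of_periodicFrom_of_eventually_const {α : Type*} {f : ℕ → α} {q r N : ℕ}
    (hr : 0 < r) (hper : ∀ i, f (q + i) = f (q + r + i)) (hconst : ∀ m, N ≤ m → f m = f N)
    (i : ℕ) :
    f (q + i) = f N := by
  have hperiodic : Function.Periodic (fun i => f (q + i)) r := fun i => by
    simp only [hper i, Nat.add_right_comm q r i, Nat.add_assoc]
  have hshift : f (q + (i + N * r)) = f (q + i) := hperiodic.nat_mul N i
  rw [← hshift, ← Nat.add_assoc]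
  exact hconst _ (by nlinarith)

theorem cindex_le_four_of_no_sinks_general {V : Type*} (D : V → V → Prop)
    (V1 V2 : Set V) (hD : IsBipartiteTournament D V1 V2)
    (hnosink : ∀ v : V, ∃ w : V, D v w) :
    (∀ M : ℕ, 0 < M → ∀ u v : V, (cmGraph D M).Adj u v →
      ∃ m : ℕ, 0 < m ∧ m ≤ 4 ∧ (cmGraph D m).Adj u v) ∧
    (∀ q : ℕ, IsCindex D q → q ≤ 4) ∧
    (∀ q p : ℕ, IsCindex D q → IsCperiod D q p → p = 1) := by
  have hconst : ∀ m, 4 ≤ m → cmGraph D m = cmGraph D 4 := fun _ => cmGraph_eq_four hD hnosink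
  refine ⟨fun M hM u v h => exists_cmGraph_adj_le_four hD hnosink hM h, ?_, ?_⟩
  · intro q hq
    refine hq.2.2 4 (by decide) ⟨1, one_pos, fun i => ?_⟩
    rw [hconst (4 + i) (by omega), hconst (4 + 1 + i) (by omega)]
  · rintro q p ⟨-, ⟨r, hr, hper⟩, -⟩ ⟨hp, -, hpmin⟩
    have hstep : cmGraph D q = cmGraph D (q + 1) := by
      rw [eq_of_periodicFrom_of_eventually_const hr hper hconst 1,
        ← eq_of_periodicFrom_of_eventually_const hr hper hconst 0, Nat.add_zero]
    have := hpmin 1 one_pos hstep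
    omega

/-- For a bipartite tournament without sinks, adjacency in `C^M(D)` implies
adjacency in `C^m(D)` for some positive `m ≤ 4`; consequently `cindex(D) ≤ 4` and
`cperiod(D) = 1`. -/
theorem cindex_le_four_of_no_sinks {V : Type*} [Fintype V] (D : V → V → Prop)
    (V1 V2 : Set V) (hD : IsBipartiteTournament D V1 V2)
    (hnosink : ∀ v : V, ∃ w : V, D v w) :
    (∀ M : ℕ, 0 < M → ∀ u v : V, (cmGraph D M).Adj u v →
      ∃ m : ℕ, 0 < m ∧ m ≤ 4 ∧ (cmGraph D m).Adj u v) ∧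
    (∀ q : ℕ, IsCindex D q → q ≤ 4) ∧
    (∀ q p : ℕ, IsCindex D q → IsCperiod D q p → p = 1) :=
  cindex_le_four_of_no_sinks_general D V1 V2 hD hnosink
end
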